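/- arXiv:1606.00648 — 4 statements merged into one kernel-verified Lean document; each statement's English description precedes it below -/
import Mathlib

section
/- Let d ∈ ℕ, α > 1/2 and weights 1 ≥ γ₁ ≥ γ₂ ≥ ⋯ > 0. For all x, y ∈ [0,1]^d, the shift-averaged tent-transformed cosine-space kernel satisfies ∫_{[0,1]^d} K_{d,α,γ}(ψ(x+Δ mod 1), ψ(y+Δ mod 1)) dΔ = Σ_{k ∈ ℤ^d} (2^{−|k|₀}/r_{α,γ}(k)) exp(2πi k·(x−y)) = K^per_{d,α,γ/2}(x, y); that is, it equals the Korobov kernel with the weights γ replaced by γ/2. -/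
open MeasureTheory Finset
open scoped Real

noncomputable section

/-- The unit cube `[0,1]^d`. -/
def cube (d : ℕ) : Set (Fin d → ℝ) := Set.Icc 0 1

/-- The tent transform `ψ(x) = 1 - |2x - 1|`. -/
def tent (x : ℝ) : ℝ := 1 - |2 * x - 1|

/-- Componentwise tent transform. -/
def tentVec {d : ℕ} (x : Fin d → ℝ) : Fin d → ℝ := fun j => tent (x j)

/-- Number of nonzero components of a vector. -/
def nnz {d : ℕ} {R : Type*} [Zero R] (k : Fin d → R) : ℕ :=
  Nat.card {j : Fin d // k j ≠ 0}

/-- Coercion of an `ℕ`-vector to a `ℤ`-vector. -/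
def intCoe {d : ℕ} (k : Fin d → ℕ) : Fin d → ℤ := fun j => (k j : ℤ)

/-- Half-period cosine basis function `φ_k`. -/
def phi {d : ℕ} (k : Fin d → ℕ) (x : Fin d → ℝ) : ℝ :=
  Real.sqrt 2 ^ nnz k * ∏ j, Real.cos (π * k j * x j)

/-- The weight `r_{α,γ}(k)`. -/
def rW {d : ℕ} (α : ℝ) (γ : ℕ → ℝ) (k : Fin d → ℤ) : ℝ :=
  ∏ j, if k j = 0 then 1 else |(k j : ℝ)| ^ (2 * α) / γ (j.1 + 1)

/-- `2 π i` as a complex number. -/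
def twoPiI : ℂ := 2 * (Real.pi : ℂ) * Complex.I

/-- Cosine coefficient `f̂(k)`. -/
def cosCoeff {d : ℕ} (f : (Fin d → ℝ) → ℂ) (k : Fin d → ℕ) : ℂ :=
  ∫ x in cube d, f x * (phi k x : ℂ)

/-- Squared norm in the weighted half-period cosine space. -/
def cosNormSq (d : ℕ) (α : ℝ) (γ : ℕ → ℝ) (f : (Fin d → ℝ) → ℂ) : ℝ :=
  ∑' k : Fin d → ℕ, ‖cosCoeff f k‖ ^ 2 * rW α γ (intCoe k)

/-- Membership in the weighted half-period cosine space `C_{d,α,γ}`. -/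
def memCos (d : ℕ) (α : ℝ) (γ : ℕ → ℝ) (f : (Fin d → ℝ) → ℂ) : Prop :=
  MemLp f 2 (volume.restrict (cube d)) ∧
    Summable fun k : Fin d → ℕ => ‖cosCoeff f k‖ ^ 2 * rW α γ (intCoe k)

/-- Fourier coefficient `f̃(h)`. -/
def fourCoeff {d : ℕ} (f : (Fin d → ℝ) → ℂ) (h : Fin d → ℤ) : ℂ :=
  ∫ x in cube d, f x * Complex.exp (-twoPiI * ∑ j, (h j : ℂ) * (x j : ℂ))

/-- Squared norm in the weighted Korobov space. -/
def korNormSq (d : ℕ) (α : ℝ) (γ : ℕ → ℝ) (f : (Fin d → ℝ) → ℂ) : ℝ :=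
  ∑' h : Fin d → ℤ, ‖fourCoeff f h‖ ^ 2 * rW α γ h

/-- Membership in the weighted Korobov space `E_{d,α,γ}`. -/
def memKor (d : ℕ) (α : ℝ) (γ : ℕ → ℝ) (f : (Fin d → ℝ) → ℂ) : Prop :=
  MemLp f 2 (volume.restrict (cube d)) ∧
    Summable fun h : Fin d → ℤ => ‖fourCoeff f h‖ ^ 2 * rW α γ h

/-- Worst-case integration error of a cubature rule in the cosine space. -/
def wceCos (d : ℕ) (α : ℝ) (γ : ℕ → ℝ) {n : ℕ} (pts : Fin n → Fin d → ℝ) (w : Fin n → ℝ) : ℝ :=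
  ⨆ f : {f : (Fin d → ℝ) → ℂ // memCos d α γ f ∧ cosNormSq d α γ f ≤ 1},
    ‖(∫ x in cube d, f.1 x) - ∑ i, (w i : ℂ) * f.1 (pts i)‖

/-- Worst-case integration error of a cubature rule in the Korobov space. -/
def wceKor (d : ℕ) (α : ℝ) (γ : ℕ → ℝ) {n : ℕ} (pts : Fin n → Fin d → ℝ) (w : Fin n → ℝ) : ℝ :=
  ⨆ f : {f : (Fin d → ℝ) → ℂ // memKor d α γ f ∧ korNormSq d α γ f ≤ 1},
    ‖(∫ x in cube d, f.1 x) - ∑ i, (w i : ℂ) * f.1 (pts i)‖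

/-- Rank-1 lattice point `(i z / n) mod 1`. -/
def latPt (d n : ℕ) (z : Fin d → ℕ) (i : ℕ) : Fin d → ℝ :=
  fun j => Int.fract ((i : ℝ) * z j / n)

/-- Shifted rank-1 lattice point `(i z / n + Δ) mod 1`. -/
def latPtSh (d n : ℕ) (z : Fin d → ℕ) (Δ : Fin d → ℝ) (i : ℕ) : Fin d → ℝ :=
  fun j => Int.fract ((i : ℝ) * z j / n + Δ j)

/-- Membership in the dual lattice: `h · z ≡ 0 (mod n)`. -/
def inDual (d n : ℕ) (z : Fin d → ℕ) (h : Fin d → ℤ) : Prop :=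
  (∑ j, h j * (z j : ℤ)) % (n : ℤ) = 0

instance (d n : ℕ) (z : Fin d → ℕ) (h : Fin d → ℤ) : Decidable (inDual d n z h) := by
  unfold inDual; infer_instance

/-- Application of signs `σ ∈ {±1}^d` to an integer vector. -/
def sigApp {d : ℕ} (σ : Fin d → Bool) (k : Fin d → ℤ) : Fin d → ℤ :=
  fun j => (if σ j then 1 else -1) * k j

/-- The Riemann zeta function `ζ(x) = Σ_{k≥1} k^{-x}` as a real series. -/
def realZeta (x : ℝ) : ℝ := ∑' k : ℕ, ((k : ℝ) + 1) ^ (-x)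

/-- Reproducing kernel of the cosine space. -/
def cosKernel (d : ℕ) (α : ℝ) (γ : ℕ → ℝ) (x y : Fin d → ℝ) : ℝ :=
  ∑' k : Fin d → ℕ, phi k x * phi k y / rW α γ (intCoe k)

/-- Reproducing kernel of the Korobov space. -/
def korKernel (d : ℕ) (α : ℝ) (γ : ℕ → ℝ) (x y : Fin d → ℝ) : ℂ :=
  ∑' h : Fin d → ℤ,
    Complex.exp (twoPiI * ∑ j, (h j : ℂ) * ((x j : ℂ) - (y j : ℂ))) / (rW α γ h : ℂ)

/-- Approximate cosine coefficient `f̂_a(k)` via tent-transformed lattice points. -/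
def approxCoeff (d n : ℕ) (z : Fin d → ℕ) (f : (Fin d → ℝ) → ℂ) (k : Fin d → ℕ) : ℂ :=
  (n : ℂ)⁻¹ * ∑ i ∈ Finset.Icc 1 n,
    f (tentVec (latPt d n z i)) * (phi k (tentVec (latPt d n z i)) : ℂ)

/-- The approximation algorithm `A_{n,d,M}`. -/
def approxAlg (d n : ℕ) (z : Fin d → ℕ) (α : ℝ) (γ : ℕ → ℝ) (M : ℝ)
    (f : (Fin d → ℝ) → ℂ) (x : Fin d → ℝ) : ℂ :=
  ∑' k : {k : Fin d → ℕ // rW α γ (intCoe k) ≤ M},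
    approxCoeff d n z f k.1 * (phi k.1 x : ℂ)

/-- The aliasing term in the error of the approximate cosine coefficient. -/
def aliasTerm (d n : ℕ) (z : Fin d → ℕ) (f : (Fin d → ℝ) → ℂ) (k : Fin d → ℕ) : ℂ :=
  ∑' h : {h : Fin d → ℤ // h ≠ 0 ∧ inDual d n z h}, ∑ σ : Fin d → Bool,
    cosCoeff f (fun j => (sigApp σ h.1 j + (k j : ℤ)).natAbs) *
      ((Real.sqrt 2 ^ (-(nnz (fun j => sigApp σ h.1 j + (k j : ℤ)) : ℤ) + (nnz k : ℤ)) / 2 ^ d : ℝ) : ℂ)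

/-- `L₂` approximation error of `A_{n,d,M}` for a given `f`. -/
def approxErr (d n : ℕ) (z : Fin d → ℕ) (α : ℝ) (γ : ℕ → ℝ) (M : ℝ)
    (f : (Fin d → ℝ) → ℂ) : ℝ :=
  Real.sqrt (∫ x in cube d, ‖f x - approxAlg d n z α γ M f x‖ ^ 2)

/-- Worst-case approximation error of `A_{n,d,M}` in the cosine space. -/
def wceApp (d n : ℕ) (z : Fin d → ℕ) (α : ℝ) (γ : ℕ → ℝ) (M : ℝ) : ℝ :=
  ⨆ f : {f : (Fin d → ℝ) → ℂ // memCos d α γ f ∧ cosNormSq d α γ f ≤ 1},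
    approxErr d n z α γ M f.1

/-!
Both kernels factor over the coordinates, so everything reduces to one variable. The tent
transform satisfies `cos (π m ψ({u})) = cos (2π m u)`, hence after the shift by `Δ` the `m`-th
term of the cosine kernel is `2 cos (2π m (x + Δ)) cos (2π m (y + Δ)) / r(m)`, whose mean over
`Δ ∈ [0,1]` is `cos (2π m (x - y)) / r(m)`. Splitting this cosine into the exponentials of `±m`
halves each weight, which is the Korobov kernel with weights `γ/2`. For `α > 1/2` all series
converge absolutely, which justifies exchanging sums, products and the integral.
-/

lemma pow_nnz {M R : Type*} [Zero M] [DecidableEq M] [CommMonoid R] {d : ℕ} (k : Fin d → M)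
    (c : R) :
    c ^ nnz k = ∏ j, if k j = 0 then 1 else c := by
  rw [nnz, Nat.card_eq_fintype_card, Fintype.card_subtype, prod_ite, prod_const_one, one_mul,
    prod_const]

section PiProduct

variable {𝕜 ι : Type*} [RCLike 𝕜]

lemma prod_apply_consEquiv {d : ℕ} (f : Fin (d + 1) → ι → 𝕜) (p : ι × (Fin d → ι)) :
    ∏ j, f j (Fin.consEquiv (fun _ => ι) p j) = f 0 p.1 * ∏ j : Fin d, f j.succ (p.2 j) := by
  simp [Fin.prod_univ_succ, Fin.consEquiv]

lemma summable_norm_fin_prod : ∀ {d : ℕ} (f : Fin d → ι → 𝕜), (∀ j, Summable fun n => ‖f j n‖) →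
    Summable fun k : Fin d → ι => ‖∏ j, f j (k j)‖
  | 0, _, _ => (hasSum_fintype _).summable
  | d + 1, f, hf => by
    rw [← (Fin.consEquiv fun _ => ι).summable_iff]
    simpa only [Function.comp_def, prod_apply_consEquiv] using
      (hf 0).mul_norm (summable_norm_fin_prod (fun j => f j.succ) fun j => hf j.succ)

lemma tsum_fin_prod_eq_prod_tsum : ∀ {d : ℕ} (f : Fin d → ι → 𝕜), (∀ j, Summable fun n => ‖f j n‖) →
    ∑' k : Fin d → ι, ∏ j, f j (k j) = ∏ j, ∑' n, f j n
  | 0, _, _ => by simp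
  | d + 1, f, hf => by
    rw [← (Fin.consEquiv fun _ => ι).tsum_eq, Fin.prod_univ_succ,
      ← tsum_fin_prod_eq_prod_tsum (fun j => f j.succ) fun j => hf j.succ,
      tsum_mul_tsum_of_summable_norm (hf 0) (summable_norm_fin_prod _ fun j => hf j.succ)]
    exact tsum_congr (prod_apply_consEquiv f)

end PiProduct

lemma setIntegral_cube_prod {𝕜 : Type*} [RCLike 𝕜] {d : ℕ} (F : Fin d → ℝ → 𝕜) :
    ∫ Δ in cube d, ∏ j, F j (Δ j) = ∏ j, ∫ t in Set.Icc (0 : ℝ) 1, F j t := by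
  rw [cube, ← Set.pi_univ_Icc, volume_pi, Measure.restrict_pi_pi]
  exact integral_fintype_prod_eq_prod F

/-- The one-dimensional reciprocal weight `1 / r_{α,g}(m)`. -/
def invWeight (α g : ℝ) (m : ℤ) : ℝ :=
  if m = 0 then 1 else g / |(m : ℝ)| ^ (2 * α)

lemma inv_rW {d : ℕ} (α : ℝ) (γ : ℕ → ℝ) (k : Fin d → ℤ) :
    (rW α γ k)⁻¹ = ∏ j, invWeight α (γ (j.1 + 1)) (k j) := by
  rw [rW, ← prod_inv_distrib]
  refine prod_congr rfl fun j _ => ?_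
  split_ifs <;> simp [invWeight, *]

lemma inv_two_pow_nnz_div_rW {d : ℕ} (α : ℝ) (γ : ℕ → ℝ) (k : Fin d → ℤ) :
    ((2 : ℝ) ^ nnz k)⁻¹ / rW α γ k = ∏ j, invWeight α (γ (j.1 + 1) / 2) (k j) := by
  rw [div_eq_mul_inv, inv_rW, pow_nnz, ← prod_inv_distrib, ← prod_mul_distrib]
  refine prod_congr rfl fun j _ => ?_
  split_ifs <;> simp [invWeight, *]
  ring

lemma summable_invWeight {α : ℝ} (hα : 1 < 2 * α) (g : ℝ) : Summable (invWeight α g) := by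
  refine (((Real.summable_abs_int_rpow hα).mul_left g).update 0 1).congr fun m => ?_
  rcases eq_or_ne m 0 with rfl | hm
  · simp [invWeight]
  · simp [invWeight, hm, div_eq_mul_inv, Real.rpow_neg (abs_nonneg _)]

lemma summable_invWeight_natCast {α : ℝ} (hα : 1 < 2 * α) (g : ℝ) :
    Summable fun m : ℕ => invWeight α g m :=
  (summable_invWeight hα g).comp_injective Nat.cast_injective

lemma cos_mul_tent_fract (m : ℕ) (u : ℝ) :
    Real.cos (π * m * tent (Int.fract u)) = Real.cos (π * m * (2 * u)) := by
  have hperiod : Real.cos (π * m * (2 * u)) = Real.cos (π * m * (2 * Int.fract u)) := by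
    conv_lhs => rw [← Int.floor_add_fract u]
    rw [show π * m * (2 * (⌊u⌋ + Int.fract u)) = π * m * (2 * Int.fract u) + (m * ⌊u⌋ : ℤ) * (2 * π)
        by push_cast; ring, Real.cos_add_int_mul_two_pi]
  rw [hperiod, tent]
  rcases le_total (2 * Int.fract u - 1) 0 with h | h
  · rw [abs_of_nonpos h]; ring_nf
  · rw [abs_of_nonneg h, show π * m * (1 - (2 * Int.fract u - 1))
      = -(π * m * (2 * Int.fract u)) + (m : ℤ) * (2 * π) by push_cast; ring,
      Real.cos_add_int_mul_two_pi, Real.cos_neg]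

lemma integral_cos_mul_cos_shift {m : ℕ} (hm : m ≠ 0) (a b : ℝ) :
    ∫ t in (0 : ℝ)..1, Real.cos (π * m * (2 * (a + t))) * Real.cos (π * m * (2 * (b + t)))
      = Real.cos (2 * π * m * (a - b)) / 2 := by
  have hm' : 4 * π * m ≠ 0 := by positivity
  have hprod : ∀ t : ℝ, Real.cos (π * m * (2 * (a + t))) * Real.cos (π * m * (2 * (b + t)))
      = (Real.cos (2 * π * m * (a - b)) + Real.cos (4 * π * m * t + 2 * π * m * (a + b))) / 2 := by
    intro t
    rw [show 2 * π * m * (a - b) = π * m * (2 * (a + t)) - π * m * (2 * (b + t)) by ring,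
      show 4 * π * m * t + 2 * π * m * (a + b) = π * m * (2 * (a + t)) + π * m * (2 * (b + t))
        by ring, Real.cos_sub, Real.cos_add]
    ring
  have hosc : ∫ t in (0 : ℝ)..1, Real.cos (4 * π * m * t + 2 * π * m * (a + b)) = 0 := by
    rw [intervalIntegral.integral_comp_mul_add Real.cos hm', integral_cos, mul_one, mul_zero,
      zero_add, show 4 * π * m + 2 * π * m * (a + b)
        = 2 * π * m * (a + b) + (2 * m : ℤ) * (2 * π) by push_cast; ring,
      Real.sin_add_int_mul_two_pi, sub_self, smul_zero]
  simp_rw [hprod]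
  rw [intervalIntegral.integral_div, intervalIntegral.integral_add intervalIntegrable_const
    (by apply Continuous.intervalIntegrable; fun_prop), hosc]
  simp

/-- Term `m` of the one-dimensional cosine kernel with weight `g`: `φ_m(a) φ_m(b) / r_{α,g}(m)`. -/
def cosKernelTerm (α g : ℝ) (m : ℕ) (a b : ℝ) : ℝ :=
  (if m = 0 then 1 else 2) * invWeight α g m * (Real.cos (π * m * a) * Real.cos (π * m * b))

lemma phi_mul_phi_div_rW {d : ℕ} (α : ℝ) (γ : ℕ → ℝ) (k : Fin d → ℕ) (x y : Fin d → ℝ) :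
    phi k x * phi k y / rW α γ (intCoe k)
      = ∏ j, cosKernelTerm α (γ (j.1 + 1)) (k j) (x j) (y j) := by
  have hsqrt : √2 ^ nnz k * √2 ^ nnz k = ∏ j, if k j = 0 then 1 else 2 := by
    rw [← mul_pow, Real.mul_self_sqrt zero_le_two, pow_nnz]
  calc phi k x * phi k y / rW α γ (intCoe k)
      = (√2 ^ nnz k * √2 ^ nnz k) * (rW α γ (intCoe k))⁻¹ *
          ((∏ j, Real.cos (π * k j * x j)) * ∏ j, Real.cos (π * k j * y j)) := by
        rw [phi, phi]; ring
    _ = ∏ j, cosKernelTerm α (γ (j.1 + 1)) (k j) (x j) (y j) := by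
        rw [hsqrt, inv_rW, ← prod_mul_distrib, ← prod_mul_distrib, ← prod_mul_distrib]
        rfl

lemma abs_cosKernelTerm_le (α g : ℝ) (m : ℕ) (a b : ℝ) :
    |cosKernelTerm α g m a b| ≤ 2 * |invWeight α g m| := by
  have hcos : |Real.cos (π * m * a) * Real.cos (π * m * b)| ≤ 1 := by
    rw [abs_mul]; exact mul_le_one₀ (Real.abs_cos_le_one _) (abs_nonneg _) (Real.abs_cos_le_one _)
  have hc : |(if m = 0 then (1 : ℝ) else 2)| ≤ 2 := by split_ifs <;> norm_num
  rw [cosKernelTerm, abs_mul, abs_mul]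
  calc _ ≤ 2 * |invWeight α g m| * 1 := by gcongr
    _ = _ := mul_one _

lemma summable_norm_cosKernelTerm {α : ℝ} (hα : 1 < 2 * α) (g a b : ℝ) :
    Summable fun m => ‖cosKernelTerm α g m a b‖ :=
  .of_nonneg_of_le (fun _ => norm_nonneg _) (fun m => abs_cosKernelTerm_le α g m a b)
    ((summable_invWeight_natCast hα g).abs.mul_left 2)

lemma cosKernel_eq_prod {d : ℕ} {α : ℝ} (hα : 1 < 2 * α) (γ : ℕ → ℝ) (x y : Fin d → ℝ) :
    cosKernel d α γ x y = ∏ j, ∑' m, cosKernelTerm α (γ (j.1 + 1)) m (x j) (y j) := by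
  rw [cosKernel, ← tsum_fin_prod_eq_prod_tsum _ fun j => summable_norm_cosKernelTerm hα _ _ _]
  exact tsum_congr fun k => phi_mul_phi_div_rW α γ k x y

lemma cosKernelTerm_tent_fract (α g : ℝ) (m : ℕ) (u v : ℝ) :
    cosKernelTerm α g m (tent (Int.fract u)) (tent (Int.fract v))
      = cosKernelTerm α g m (2 * u) (2 * v) := by
  simp only [cosKernelTerm, cos_mul_tent_fract]

lemma setIntegral_cosKernelTerm_shift (α g : ℝ) (m : ℕ) (a b : ℝ) :
    ∫ t in Set.Icc (0 : ℝ) 1, cosKernelTerm α g m (2 * (a + t)) (2 * (b + t))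
      = invWeight α g m * Real.cos (2 * π * m * (a - b)) := by
  rcases eq_or_ne m 0 with rfl | hm
  · simp [cosKernelTerm]
  · rw [integral_Icc_eq_integral_Ioc, ← intervalIntegral.integral_of_le zero_le_one]
    simp only [cosKernelTerm, if_neg hm]
    rw [intervalIntegral.integral_const_mul, integral_cos_mul_cos_shift hm]
    ring

lemma setIntegral_tsum_cosKernelTerm_shift {α : ℝ} (hα : 1 < 2 * α) (g a b : ℝ) :
    ∫ t in Set.Icc (0 : ℝ) 1, ∑' m, cosKernelTerm α g m (2 * (a + t)) (2 * (b + t))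
      = ∑' m : ℕ, invWeight α g m * Real.cos (2 * π * m * (a - b)) := by
  have hint : ∀ m, IntegrableOn (fun t => cosKernelTerm α g m (2 * (a + t)) (2 * (b + t)))
      (Set.Icc 0 1) := fun m => by
    apply Continuous.integrableOn_Icc; unfold cosKernelTerm; fun_prop
  have hbound : ∀ m, ∫ t in Set.Icc (0 : ℝ) 1, ‖cosKernelTerm α g m (2 * (a + t)) (2 * (b + t))‖
      ≤ 2 * |invWeight α g m| := fun m => by
    calc _ ≤ ∫ _ in Set.Icc (0 : ℝ) 1, 2 * |invWeight α g m| :=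
          setIntegral_mono (hint m).norm (integrableOn_const measure_Icc_lt_top.ne) fun _ =>
            abs_cosKernelTerm_le ..
      _ = 2 * |invWeight α g m| := by simp
  rw [← integral_tsum_of_summable_integral_norm hint
    (.of_nonneg_of_le (fun _ => integral_nonneg fun _ => norm_nonneg _) hbound
      ((summable_invWeight_natCast hα g).abs.mul_left 2))]
  exact tsum_congr fun m => setIntegral_cosKernelTerm_shift α g m a b

lemma integral_cosKernel_tent_shift {d : ℕ} {α : ℝ} (hα : 1 < 2 * α) (γ : ℕ → ℝ)
    (x y : Fin d → ℝ) :
    ∫ Δ in cube d, cosKernel d α γ (tentVec fun j => Int.fract (x j + Δ j))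
        (tentVec fun j => Int.fract (y j + Δ j))
      = ∏ j, ∑' m : ℕ, invWeight α (γ (j.1 + 1)) m * Real.cos (2 * π * m * (x j - y j)) := by
  simp only [cosKernel_eq_prod hα, tentVec, cosKernelTerm_tent_fract]
  rw [setIntegral_cube_prod fun j t => ∑' m, cosKernelTerm α (γ (j.1 + 1)) m (2 * (x j + t))
    (2 * (y j + t))]
  exact prod_congr rfl fun j _ => setIntegral_tsum_cosKernelTerm_shift hα _ _ _

lemma invWeight_neg (α g : ℝ) (m : ℤ) : invWeight α g (-m) = invWeight α g m := by
  simp [invWeight]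

lemma invWeight_half (α g : ℝ) {m : ℤ} (hm : m ≠ 0) :
    invWeight α (g / 2) m = invWeight α g m / 2 := by
  simp only [invWeight, if_neg hm]; ring

lemma norm_invWeight_mul_exp (α g a b : ℝ) (m : ℤ) :
    ‖(invWeight α g m : ℂ) * Complex.exp (twoPiI * (m * ((a : ℂ) - b)))‖ = |invWeight α g m| := by
  rw [norm_mul, show twoPiI * (m * ((a : ℂ) - b)) = ((2 * π * m * (a - b) : ℝ) : ℂ) * Complex.I by
    unfold twoPiI; push_cast; ring, Complex.norm_exp_ofReal_mul_I, mul_one, Complex.norm_real,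
    Real.norm_eq_abs]

lemma summable_norm_invWeight_mul_exp {α : ℝ} (hα : 1 < 2 * α) (g a b : ℝ) :
    Summable fun m : ℤ => ‖(invWeight α g m : ℂ) * Complex.exp (twoPiI * (m * ((a : ℂ) - b)))‖ := by
  simpa only [norm_invWeight_mul_exp] using (summable_invWeight hα g).abs

lemma ofReal_tsum_invWeight_mul_cos {α : ℝ} (hα : 1 < 2 * α) (g a b : ℝ) :
    ((∑' m : ℕ, invWeight α g m * Real.cos (2 * π * m * (a - b)) : ℝ) : ℂ)
      = ∑' m : ℤ, (invWeight α (g / 2) m : ℂ) * Complex.exp (twoPiI * (m * ((a : ℂ) - b))) := by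
  set f : ℤ → ℂ := fun m => (invWeight α (g / 2) m : ℂ) * Complex.exp (twoPiI * (m * ((a : ℂ) - b)))
  have hf : Summable f := (summable_norm_invWeight_mul_exp hα (g / 2) a b).of_norm
  have hf0 : f 0 = 1 := by simp [f, invWeight]
  -- `tsum_nat_add_neg` pairs `m` with `-m` and so counts the term `m = 0` twice.
  have hpair : ∀ n : ℕ, f n + f (-n)
      = ((invWeight α g n * Real.cos (2 * π * n * (a - b)) : ℝ) : ℂ) + if n = 0 then 1 else 0 := by
    intro n
    have hexp : Complex.exp (twoPiI * ((n : ℤ) * ((a : ℂ) - b)))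
        + Complex.exp (twoPiI * (((-n : ℤ) : ℂ) * ((a : ℂ) - b)))
        = 2 * Complex.cos (2 * π * n * (a - b)) := by
      rw [Complex.two_cos]; unfold twoPiI; push_cast; ring_nf
    rcases eq_or_ne n 0 with rfl | hn
    · simp [f, invWeight]
    · simp only [f, invWeight_neg, ← mul_add, hexp, invWeight_half α g (Int.natCast_ne_zero.2 hn),
        if_neg hn]
      push_cast
      ring
  have hsum : ∑' n : ℕ, (f n + f (-n)) = ∑' m, f m + f 0 := tsum_nat_add_neg hf
  have hcos : Summable fun n : ℕ => invWeight α g n * Real.cos (2 * π * n * (a - b)) :=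
    .of_norm_bounded (summable_invWeight_natCast hα g).abs fun n => by
      rw [Real.norm_eq_abs, abs_mul]
      exact mul_le_of_le_one_right (abs_nonneg _) (Real.abs_cos_le_one _)
  simp only [hpair] at hsum
  rw [(Complex.summable_ofReal.2 hcos).tsum_add (hasSum_ite_eq 0 1).summable, tsum_ite_eq, hf0]
    at hsum
  rw [Complex.ofReal_tsum]
  exact add_right_cancel hsum

lemma prod_invWeight_mul_exp {d : ℕ} (α : ℝ) (γ : ℕ → ℝ) (x y : Fin d → ℝ) (k : Fin d → ℤ) :
    ∏ j, (invWeight α (γ (j.1 + 1) / 2) (k j) : ℂ) *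
        Complex.exp (twoPiI * (k j * ((x j : ℂ) - y j)))
      = (((2 : ℝ) ^ nnz k)⁻¹ / rW α γ k : ℝ) *
          Complex.exp (twoPiI * ∑ j, (k j : ℂ) * ((x j : ℂ) - (y j : ℂ))) := by
  rw [prod_mul_distrib, ← Complex.ofReal_prod, inv_two_pow_nnz_div_rW, mul_sum, Complex.exp_sum]

theorem shift_averaged_tent_kernel_general (d : ℕ) (α : ℝ) (γ : ℕ → ℝ) (hα : 1 / 2 < α)
    (x y : Fin d → ℝ) :
    ((∫ Δ in cube d,
          cosKernel d α γ (tentVec fun j => Int.fract (x j + Δ j))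
            (tentVec fun j => Int.fract (y j + Δ j)) : ℝ) : ℂ) =
        (∑' k : Fin d → ℤ,
          (((2 : ℝ) ^ nnz k)⁻¹ / rW α γ k : ℝ) *
            Complex.exp (twoPiI * ∑ j, (k j : ℂ) * ((x j : ℂ) - (y j : ℂ)))) ∧
      (∑' k : Fin d → ℤ,
          (((2 : ℝ) ^ nnz k)⁻¹ / rW α γ k : ℝ) *
            Complex.exp (twoPiI * ∑ j, (k j : ℂ) * ((x j : ℂ) - (y j : ℂ)))) =
        korKernel d α (fun j => γ j / 2) x y := by
  have h2α : 1 < 2 * α := by linarith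
  refine ⟨?_, tsum_congr fun k => ?_⟩
  · rw [integral_cosKernel_tent_shift h2α, Complex.ofReal_prod]
    simp only [ofReal_tsum_invWeight_mul_cos h2α]
    rw [← tsum_fin_prod_eq_prod_tsum _ fun j => summable_norm_invWeight_mul_exp h2α _ _ _]
    exact tsum_congr (prod_invWeight_mul_exp α γ x y)
  · rw [inv_two_pow_nnz_div_rW, div_eq_mul_inv (Complex.exp _), ← Complex.ofReal_inv, inv_rW,
      mul_comm]

/-- The shift-averaged tent-transformed cosine-space kernel equals
`Σ_{k∈ℤ^d} (2^{-|k|₀}/r_{α,γ}(k)) exp(2πi k·(x-y))`, which is the Korobov kernel with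
weights `γ/2`. -/
theorem shift_averaged_tent_kernel (d : ℕ) (α : ℝ) (γ : ℕ → ℝ) (hα : 1 / 2 < α)
    (hγ1 : γ 1 ≤ 1) (hγdec : ∀ j : ℕ, 1 ≤ j → γ (j + 1) ≤ γ j)
    (hγpos : ∀ j : ℕ, 1 ≤ j → 0 < γ j)
    (x y : Fin d → ℝ) (hx : x ∈ cube d) (hy : y ∈ cube d) :
    ((∫ Δ in cube d,
          cosKernel d α γ (tentVec fun j => Int.fract (x j + Δ j))
            (tentVec fun j => Int.fract (y j + Δ j)) : ℝ) : ℂ) =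
        (∑' k : Fin d → ℤ,
          (((2 : ℝ) ^ nnz k)⁻¹ / rW α γ k : ℝ) *
            Complex.exp (twoPiI * ∑ j, (k j : ℂ) * ((x j : ℂ) - (y j : ℂ)))) ∧
      (∑' k : Fin d → ℤ,
          (((2 : ℝ) ^ nnz k)⁻¹ / rW α γ k : ℝ) *
            Complex.exp (twoPiI * ∑ j, (k j : ℂ) * ((x j : ℂ) - (y j : ℂ)))) =
        korKernel d α (fun j => γ j / 2) x y :=
  shift_averaged_tent_kernel_general d α γ hα x y
end
end

section
/- Let d ∈ ℕ, α > 1/2, weights 1 ≥ γ₁ ≥ γ₂ ≥ ⋯ > 0, n ∈ ℕ, z ∈ {0,…,n−1}^d and M ≥ 1. Then Σ_{k ∈ H_M} Σ_{0 ≠ h ∈ Λ(z,n)^⊥} Σ_{σ ∈ {±1}^d} 2^{|k|₀} / (2^d r_{α,γ}(σ(h) + k)) = Σ_{k ∈ H̃_M} Σ_{0 ≠ h ∈ Λ(z,n)^⊥} 1 / r_{α,γ}(h + k); that is, the aliasing-error bound for the tent-transformed lattice algorithm over the positive-hyperoctant hyperbolic cross H_M equals the corresponding Korobov-space quantity over the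 full hyperbolic cross H̃_M. -/
open MeasureTheory Finset
open scoped Real

noncomputable section

/-!
Since `r_{α,γ}` is invariant under sign changes of coordinates, `r(σ(h) + k) = r(h + σ(k))`.
For `k ∈ ℤ₊^d` the map `σ ↦ σ(k)` covers each point of the sign orbit `{k' : |k'| = k}` exactly
`2^{d - |k|₀}` times, so the inner sum over `σ`, weighted by `2^{|k|₀} / 2^d`, is the sum of
`1 / r(h + k')` over that orbit. As `r(k') = r(k)` on the orbit, the orbits of `k ∈ H_M` partition
`H̃_M`. Exchanging the sum over `h` with the finite orbit sum uses the summability of `1 / r`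
for `α > 1/2`, and regrouping the sum over `H̃_M` uses only that the terms are nonnegative.
-/

lemma summable_pi_prod_of_nonneg {κ : Type*} :
    ∀ {d : ℕ} (g : Fin d → κ → ℝ), (∀ j, Summable (g j)) → (∀ j t, 0 ≤ g j t) →
      Summable fun x : Fin d → κ => ∏ j, g j (x j)
  | 0, _, _, _ => Summable.of_finite
  | d + 1, g, hs, hg => by
    have htail := summable_pi_prod_of_nonneg (fun j => g j.succ)
      (fun j => hs j.succ) (fun j => hg j.succ)
    have hpair := (hs 0).mul_of_nonneg htail (hg 0) fun x => prod_nonneg fun j _ => hg _ _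
    rw [← (Fin.consEquiv fun _ => κ).summable_iff]
    refine hpair.congr fun p => ?_
    simp [Fin.consEquiv, Fin.prod_univ_succ]

lemma tsum_eq_tsum_sum_fiber_of_nonneg {β κ : Type*} {f : β → ℝ} (hf : 0 ≤ f) (p : β → κ)
    (F : κ → Finset β) (hF : ∀ c b, b ∈ F c ↔ p b = c) :
    ∑' b, f b = ∑' c, ∑ b ∈ F c, f b := by
  have hfiber : ∀ c, ∑' b : p ⁻¹' {c}, ENNReal.ofReal (f b) = ∑ b ∈ F c, ENNReal.ofReal (f b) :=
    fun c => by
      have hset : p ⁻¹' {c} = ↑(F c) := Set.ext fun b => by simp [hF]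
      rw [← Finset.tsum_subtype']
      exact tsum_congr_set_coe (fun b => ENNReal.ofReal (f b)) hset
  -- in `ℝ≥0∞` regrouping is unconditional, and `toReal` sends a divergent sum to `0`, the junk
  -- value of a non-summable real `tsum`
  calc ∑' b, f b = (∑' b, ENNReal.ofReal (f b)).toReal := by
        rw [ENNReal.tsum_toReal_eq fun _ => ENNReal.ofReal_ne_top]
        simp [ENNReal.toReal_ofReal (hf _)]
    _ = (∑' c, ∑ b ∈ F c, ENNReal.ofReal (f b)).toReal := by
        rw [← ENNReal.tsum_fiberwise _ p]
        simp_rw [hfiber]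
    _ = ∑' c, ∑ b ∈ F c, f b := by
        rw [ENNReal.tsum_toReal_eq fun _ =>
          ENNReal.sum_ne_top.mpr fun _ _ => ENNReal.ofReal_ne_top]
        simp [ENNReal.toReal_sum, ENNReal.toReal_ofReal (hf _)]

def coordWeight (α g : ℝ) (t : ℤ) : ℝ := if t = 0 then 1 else |(t : ℝ)| ^ (2 * α) / g

def signOrbit {d : ℕ} (m : Fin d → ℕ) : Finset (Fin d → ℤ) :=
  Fintype.piFinset fun j => {(m j : ℤ), -(m j : ℤ)}

lemma rW_eq_prod_coordWeight {d : ℕ} (α : ℝ) (γ : ℕ → ℝ) (k : Fin d → ℤ) :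
    rW α γ k = ∏ j, coordWeight α (γ (j.1 + 1)) (k j) := rfl

lemma coordWeight_neg (α g : ℝ) (t : ℤ) : coordWeight α g (-t) = coordWeight α g t := by
  simp [coordWeight]

lemma coordWeight_nonneg (α : ℝ) {g : ℝ} (hg : 0 ≤ g) (t : ℤ) : 0 ≤ coordWeight α g t := by
  unfold coordWeight
  split_ifs
  exacts [zero_le_one, by positivity]

lemma summable_inv_coordWeight {α : ℝ} (hα : 1 / 2 < α) (g : ℝ) :
    Summable fun t : ℤ => (coordWeight α g t)⁻¹ := by
  have hpow : Summable fun t : ℤ => g * |(t : ℝ)| ^ (-(2 * α)) :=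
    (Real.summable_abs_int_rpow (by linarith)).mul_left g
  refine (hpow.update 0 1).congr fun t => ?_
  rcases eq_or_ne t 0 with rfl | ht
  · simp [coordWeight]
  · simp [coordWeight, ht, Real.rpow_neg (abs_nonneg _), div_eq_mul_inv]

section Weights

variable {d : ℕ} {α : ℝ} {γ : ℕ → ℝ}

lemma inv_rW_nonneg (hγ : ∀ j, 1 ≤ j → 0 ≤ γ j) (k : Fin d → ℤ) : 0 ≤ 1 / rW α γ k :=
  one_div_nonneg.mpr <| prod_nonneg fun j _ => coordWeight_nonneg α (hγ (j.1 + 1) (by omega)) _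

lemma summable_inv_rW (hα : 1 / 2 < α) (hγ : ∀ j, 1 ≤ j → 0 ≤ γ j) :
    Summable fun k : Fin d → ℤ => 1 / rW α γ k := by
  refine (summable_pi_prod_of_nonneg _ (fun j => summable_inv_coordWeight hα _)
    fun j t => inv_nonneg.mpr (coordWeight_nonneg α (hγ (j.1 + 1) (by omega)) t)).congr
    fun k => ?_
  rw [rW_eq_prod_coordWeight, one_div, prod_inv_distrib]

lemma summable_inv_rW_add (hα : 1 / 2 < α) (hγ : ∀ j, 1 ≤ j → 0 ≤ γ j) (c : Fin d → ℤ) :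
    Summable fun k : Fin d → ℤ => 1 / rW α γ (k + c) :=
  ((Equiv.addRight c).summable_iff (f := fun k : Fin d → ℤ => 1 / rW α γ k)).mpr
    (summable_inv_rW hα hγ)

lemma mem_signOrbit {m : Fin d → ℕ} {k : Fin d → ℤ} :
    k ∈ signOrbit m ↔ (fun j => (k j).natAbs) = m := by
  simp [signOrbit, funext_iff, Int.natAbs_eq_iff]

lemma rW_of_mem_signOrbit {m : Fin d → ℕ} {k : Fin d → ℤ} (hk : k ∈ signOrbit m) :
    rW α γ k = rW α γ (intCoe m) := by
  rw [← mem_signOrbit.mp hk]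
  refine prod_congr rfl fun j _ => ?_
  simp [intCoe, Nat.cast_natAbs]

lemma two_pow_nnz (m : Fin d → ℕ) : (2 : ℝ) ^ nnz m = ∏ j, if m j = 0 then 1 else 2 := by
  classical
  rw [prod_ite, prod_const, prod_const, one_pow, one_mul, nnz, Nat.card_eq_fintype_card,
    Fintype.card_subtype]

lemma sum_bool_div_coordWeight (g : ℝ) (m : ℕ) (t : ℤ) :
    ∑ b : Bool, (if m = 0 then (1 : ℝ) else 2) /
        (2 * coordWeight α g ((if b then 1 else -1) * t + m)) =
      ∑ s ∈ ({(m : ℤ), -(m : ℤ)} : Finset ℤ), 1 / coordWeight α g (t + s) := by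
  have hflip : -t + m = -(t + -m) := by ring
  rcases eq_or_ne m 0 with rfl | hm
  · simp only [Fintype.sum_bool, if_true, Bool.false_eq_true, if_false, CharP.cast_eq_zero,
      neg_zero, insert_eq_of_mem (mem_singleton_self _), sum_singleton, add_zero, one_mul,
      neg_one_mul, coordWeight_neg]
    ring
  · rw [sum_pair (by omega)]
    simp only [Fintype.sum_bool, if_true, Bool.false_eq_true, if_false, hm, one_mul,
      neg_one_mul, hflip, coordWeight_neg]
    ring

lemma sum_sign_div_rW (m : Fin d → ℕ) (h : Fin d → ℤ) :
    ∑ σ : Fin d → Bool, (2 : ℝ) ^ nnz m / (2 ^ d * rW α γ (fun j => sigApp σ h j + m j)) =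
      ∑ k ∈ signOrbit m, 1 / rW α γ (h + k) :=
  calc ∑ σ : Fin d → Bool, (2 : ℝ) ^ nnz m / (2 ^ d * rW α γ (fun j => sigApp σ h j + m j))
      = ∑ σ : Fin d → Bool, ∏ j, (if m j = 0 then (1 : ℝ) else 2) /
          (2 * coordWeight α (γ (j.1 + 1)) ((if σ j then 1 else -1) * h j + m j)) := by
        refine sum_congr rfl fun σ _ => ?_
        rw [prod_div_distrib, prod_mul_distrib, prod_const, ← two_pow_nnz, card_univ,
          Fintype.card_fin, rW_eq_prod_coordWeight]
        rfl
    _ = ∏ j, ∑ b : Bool, (if m j = 0 then (1 : ℝ) else 2) /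
          (2 * coordWeight α (γ (j.1 + 1)) ((if b then 1 else -1) * h j + m j)) :=
        (Fintype.prod_sum fun j (b : Bool) => (if m j = 0 then (1 : ℝ) else 2) /
          (2 * coordWeight α (γ (j.1 + 1)) ((if b then 1 else -1) * h j + m j))).symm
    _ = ∏ j, ∑ s ∈ ({(m j : ℤ), -(m j : ℤ)} : Finset ℤ),
          1 / coordWeight α (γ (j.1 + 1)) (h j + s) :=
        prod_congr rfl fun j _ => sum_bool_div_coordWeight _ _ _
    _ = ∑ k ∈ signOrbit m, 1 / rW α γ (h + k) := by
        rw [signOrbit, prod_univ_sum]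
        refine sum_congr rfl fun k _ => ?_
        rw [rW_eq_prod_coordWeight, prod_div_distrib, prod_const_one]
        rfl

lemma tsum_eq_tsum_sum_signOrbit {f : (Fin d → ℤ) → ℝ} (hf : 0 ≤ f) :
    ∑' k, f k = ∑' m : Fin d → ℕ, ∑ k ∈ signOrbit m, f k :=
  tsum_eq_tsum_sum_fiber_of_nonneg hf _ _ fun _ _ => mem_signOrbit

lemma tsum_sum_sign_div_rW (hα : 1 / 2 < α) (hγ : ∀ j, 1 ≤ j → 0 ≤ γ j)
    (P : (Fin d → ℤ) → Prop) (m : Fin d → ℕ) :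
    ∑' h : {h : Fin d → ℤ // P h}, ∑ σ : Fin d → Bool,
        (2 : ℝ) ^ nnz m / (2 ^ d * rW α γ (fun j => sigApp σ h.1 j + (m j : ℤ))) =
      ∑ k ∈ signOrbit m, ∑' h : {h : Fin d → ℤ // P h}, 1 / rW α γ (h.1 + k) := by
  have hsum : ∀ k ∈ signOrbit m, Summable fun h : {h : Fin d → ℤ // P h} =>
      1 / rW α γ (h.1 + k) := fun k _ =>
    (summable_inv_rW_add hα hγ k).comp_injective Subtype.val_injective
  rw [← Summable.tsum_finsetSum hsum]
  exact tsum_congr fun h => sum_sign_div_rW m h.1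

lemma tsum_rW_le_eq_tsum_sum_signOrbit {M : ℝ} {G : (Fin d → ℤ) → ℝ} (hG : 0 ≤ G) :
    ∑' k : {k : Fin d → ℤ // rW α γ k ≤ M}, G k =
      ∑' m : {m : Fin d → ℕ // rW α γ (intCoe m) ≤ M}, ∑ k ∈ signOrbit m.1, G k := by
  change ∑' k : ({k | rW α γ k ≤ M} : Set (Fin d → ℤ)), G k =
    ∑' m : ({m | rW α γ (intCoe m) ≤ M} : Set (Fin d → ℕ)), ∑ k ∈ signOrbit m.1, G k
  rw [_root_.tsum_subtype, _root_.tsum_subtype _ fun m => ∑ k ∈ signOrbit m, G k,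
    tsum_eq_tsum_sum_signOrbit (Set.indicator_nonneg fun k _ => hG k)]
  refine tsum_congr fun m => ?_
  have horbit : ∀ k ∈ signOrbit m, {k | rW α γ k ≤ M}.indicator G k =
      if rW α γ (intCoe m) ≤ M then G k else 0 := fun k hk => by
    simp [Set.indicator_apply, rW_of_mem_signOrbit hk]
  rw [sum_congr rfl horbit, Set.indicator_apply]
  simp only [Set.mem_ofPred_eq, sum_ite_irrel, sum_const_zero]

end Weights

theorem aliasing_bound_cosine_eq_korobov_general (d : ℕ) (α : ℝ) (γ : ℕ → ℝ) (hα : 1 / 2 < α)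
    (hγpos : ∀ j : ℕ, 1 ≤ j → 0 < γ j)
    (n : ℕ) (z : Fin d → ℕ) (M : ℝ) :
    (∑' k : {k : Fin d → ℕ // rW α γ (intCoe k) ≤ M},
        ∑' h : {h : Fin d → ℤ // h ≠ 0 ∧ inDual d n z h},
          ∑ σ : Fin d → Bool,
            (2 : ℝ) ^ nnz k.1 /
              (2 ^ d * rW α γ (fun j => sigApp σ h.1 j + (k.1 j : ℤ)))) =
      ∑' k : {k : Fin d → ℤ // rW α γ k ≤ M},
        ∑' h : {h : Fin d → ℤ // h ≠ 0 ∧ inDual d n z h},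
          1 / rW α γ (h.1 + k.1) := by
  have hγ : ∀ j, 1 ≤ j → 0 ≤ γ j := fun j hj => (hγpos j hj).le
  simp_rw [tsum_sum_sign_div_rW hα hγ]
  exact (tsum_rW_le_eq_tsum_sum_signOrbit fun k =>
    tsum_nonneg fun h => inv_rW_nonneg hγ _).symm

/-- The aliasing-error bound over the positive-hyperoctant hyperbolic cross
`H_M` equals the corresponding Korobov-space quantity over the full hyperbolic cross `H̃_M`. -/
theorem aliasing_bound_cosine_eq_korobov (d : ℕ) (α : ℝ) (γ : ℕ → ℝ) (hα : 1 / 2 < α)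
    (hγ1 : γ 1 ≤ 1) (hγdec : ∀ j : ℕ, 1 ≤ j → γ (j + 1) ≤ γ j)
    (hγpos : ∀ j : ℕ, 1 ≤ j → 0 < γ j)
    (n : ℕ) (hn : 0 < n) (z : Fin d → ℕ) (hz : ∀ j, z j < n) (M : ℝ) (hM : 1 ≤ M) :
    (∑' k : {k : Fin d → ℕ // rW α γ (intCoe k) ≤ M},
        ∑' h : {h : Fin d → ℤ // h ≠ 0 ∧ inDual d n z h},
          ∑ σ : Fin d → Bool,
            (2 : ℝ) ^ nnz k.1 /
              (2 ^ d * rW α γ (fun j => sigApp σ h.1 j + (k.1 j : ℤ)))) =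
      ∑' k : {k : Fin d → ℤ // rW α γ k ≤ M},
        ∑' h : {h : Fin d → ℤ // h ≠ 0 ∧ inDual d n z h},
          1 / rW α γ (h.1 + k.1) :=
  aliasing_bound_cosine_eq_korobov_general d α γ hα hγpos n z M
end
end

section
/- Let d ∈ ℕ, α > 1/2, weights 1 ≥ γ₁ ≥ γ₂ ≥ ⋯ > 0 and M ≥ 1. For every q > 1/(2α), the cardinality of the full weighted hyperbolic cross satisfies |H̃_M| ≤ M^q ∏_{j=1}^d (1 + 2 ζ(2αq) γ_j^q), where ζ is the Riemann zeta function. -/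
open MeasureTheory Finset
open scoped Real

noncomputable section

/-!
Rankin's trick: every `k` in the cross has `1 ≤ (M / r_{α,γ}(k))^q`, so the number of such `k` is
at most `M^q ∑_{k ∈ ℤ^d} r_{α,γ}(k)^{-q}`. Since `r_{α,γ}` is a product of one-dimensional weights,
this series factors as `∏_j ∑_{m ∈ ℤ} r_{α,γ_j}(m)^{-q}`, and the `j`-th factor is
`1 + 2 γ_j^q ∑_{m ≥ 1} m^{-2αq} = 1 + 2 ζ(2αq) γ_j^q`, which converges because `2αq > 1`.
-/

/-- The one-dimensional weight `r_{α,γ_j}`, so that `rW α γ k = ∏ j, rW1 α (γ (j.1 + 1)) (k j)`. -/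
def rW1 (α g : ℝ) (m : ℤ) : ℝ :=
  if m = 0 then 1 else |(m : ℝ)| ^ (2 * α) / g

lemma rW1_pos {α g : ℝ} (hg : 0 < g) (m : ℤ) : 0 < rW1 α g m := by
  unfold rW1
  split_ifs with hm
  · exact one_pos
  · exact div_pos (Real.rpow_pos_of_pos (abs_pos.2 (Int.cast_ne_zero.2 hm)) _) hg

lemma rW1_rpow_neg_of_ne_zero {α g : ℝ} (hg : 0 < g) (q : ℝ) {m : ℤ} (hm : m ≠ 0) :
    rW1 α g m ^ (-q) = g ^ q * |(m : ℝ)| ^ (-(2 * α * q)) := by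
  rw [rW1, if_neg hm, Real.div_rpow (Real.rpow_nonneg (abs_nonneg _) _) hg.le,
    ← Real.rpow_mul (abs_nonneg _), Real.rpow_neg hg.le, div_inv_eq_mul, mul_comm, mul_neg]

lemma hasSum_realZeta {x : ℝ} (hx : 1 < x) :
    HasSum (fun n : ℕ => ((n : ℝ) + 1) ^ (-x)) (realZeta x) := by
  refine Summable.hasSum ?_
  have := (summable_nat_add_iff 1).2 (Real.summable_nat_rpow.2 (neg_lt_neg hx))
  exact_mod_cast this

lemma hasSum_rW1_rpow_neg {α g q : ℝ} (hg : 0 < g) (hx : 1 < 2 * α * q) :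
    HasSum (fun m : ℤ => rW1 α g m ^ (-q)) (1 + 2 * realZeta (2 * α * q) * g ^ q) := by
  have hpos : HasSum (fun n : ℕ => rW1 α g (n + 1) ^ (-q)) (g ^ q * realZeta (2 * α * q)) := by
    refine ((hasSum_realZeta hx).mul_left (g ^ q)).congr_fun fun n => ?_
    rw [rW1_rpow_neg_of_ne_zero hg q (by omega)]
    push_cast
    rw [abs_of_pos (by positivity)]
  have hneg : HasSum (fun n : ℕ => rW1 α g (-(n + 1)) ^ (-q)) (g ^ q * realZeta (2 * α * q)) := by
    refine hpos.congr_fun fun n => ?_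
    simp only [rW1, neg_eq_zero, Int.cast_neg, abs_neg]
  have h0 : rW1 α g 0 ^ (-q) = 1 := by rw [rW1, if_pos rfl, Real.one_rpow]
  have := HasSum.of_add_one_of_neg_add_one (f := fun m : ℤ => rW1 α g m ^ (-q)) hpos hneg
  rw [h0] at this
  rwa [show 1 + 2 * realZeta (2 * α * q) * g ^ q
    = g ^ q * realZeta (2 * α * q) + 1 + g ^ q * realZeta (2 * α * q) by ring]

lemma rW_eq_prod_rW1 {d : ℕ} (α : ℝ) (γ : ℕ → ℝ) (k : Fin d → ℤ) :
    rW α γ k = ∏ j, rW1 α (γ (j.1 + 1)) (k j) :=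
  rfl

lemma card_le_rpow_mul_sum_rpow_neg {ι : Type*} (S : Finset ι) (r : ι → ℝ) {M q : ℝ}
    (hr : ∀ k ∈ S, 0 < r k ∧ r k ≤ M) (hq : 0 ≤ q) :
    (#S : ℝ) ≤ M ^ q * ∑ k ∈ S, r k ^ (-q) := by
  rw [mul_sum, card_eq_sum_ones, Nat.cast_sum, Nat.cast_one]
  refine sum_le_sum fun k hk => ?_
  obtain ⟨hr0, hrM⟩ := hr k hk
  rw [Real.rpow_neg hr0.le, ← div_eq_mul_inv, one_le_div (Real.rpow_pos_of_pos hr0 q)]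
  exact Real.rpow_le_rpow hr0.le hrM hq

lemma sum_prod_le_prod_tsum {ι β : Type*} [Fintype ι] (S : Finset (ι → β))
    (g : ι → β → ℝ) (hg : ∀ j b, 0 ≤ g j b) (hsum : ∀ j, Summable (g j)) :
    ∑ k ∈ S, ∏ j, g j (k j) ≤ ∏ j, ∑' b, g j b := by
  classical
  let T : ι → Finset β := fun j => S.image (· j)
  calc ∑ k ∈ S, ∏ j, g j (k j)
      ≤ ∑ k ∈ Fintype.piFinset T, ∏ j, g j (k j) :=
        sum_le_sum_of_subset_of_nonneg
          (fun k hk => Fintype.mem_piFinset.2 fun j => mem_image_of_mem _ hk)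
          (fun k _ _ => prod_nonneg fun j _ => hg j _)
    _ = ∏ j, ∑ b ∈ T j, g j b := prod_univ_sum T _ |>.symm
    _ ≤ ∏ j, ∑' b, g j b :=
        prod_le_prod (fun j _ => sum_nonneg fun b _ => hg j b)
          (fun j _ => (hsum j).sum_le_tsum _ fun b _ => hg j b)

lemma Set.natCard_le_of_forall_finset_card_le {α : Type*} {s : Set α} {B : ℝ}
    (h : ∀ t : Finset α, ↑t ⊆ s → (#t : ℝ) ≤ B) : (Nat.card s : ℝ) ≤ B := by
  rcases s.finite_or_infinite with hs | hs
  · rw [Nat.card_coe_set_eq, Set.ncard_eq_toFinset_card s hs]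
    exact h _ hs.coe_toFinset.subset
  · have := hs.to_subtype
    simpa [Nat.card_eq_zero_of_infinite] using h ∅ (by simp)

theorem hyperbolic_cross_card_bound_general (d : ℕ) (α : ℝ) (γ : ℕ → ℝ) (hα : 1 / 2 < α)
    (hγpos : ∀ j : ℕ, 1 ≤ j → 0 < γ j) (M : ℝ) (hM : 1 ≤ M) (q : ℝ) (hq : 1 / (2 * α) < q) :
    (Nat.card {k : Fin d → ℤ // rW α γ k ≤ M} : ℝ) ≤
      M ^ q * ∏ j : Fin d, (1 + 2 * realZeta (2 * α * q) * γ (j.1 + 1) ^ q) := by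
  have hα0 : 0 < 2 * α := by linarith
  have hq0 : 0 < q := (one_div_pos.2 hα0).trans hq
  have hx : 1 < 2 * α * q := by rwa [one_div, inv_lt_iff_one_lt_mul₀' hα0] at hq
  have hγ (j : Fin d) : 0 < γ (j.1 + 1) := hγpos _ (Nat.le_add_left 1 j)
  apply Set.natCard_le_of_forall_finset_card_le
  intro S hS
  calc (#S : ℝ)
      ≤ M ^ q * ∑ k ∈ S, rW α γ k ^ (-q) :=
        card_le_rpow_mul_sum_rpow_neg S _ (fun k hk =>
          ⟨prod_pos fun j _ => rW1_pos (hγ j) _, hS hk⟩) hq0.le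
    _ = M ^ q * ∑ k ∈ S, ∏ j, rW1 α (γ (j.1 + 1)) (k j) ^ (-q) := by
        simp only [rW_eq_prod_rW1, ← Real.finsetProd_rpow _ _ fun j _ => (rW1_pos (hγ j) _).le]
    _ ≤ M ^ q * ∏ j : Fin d, ∑' m, rW1 α (γ (j.1 + 1)) m ^ (-q) := by
        refine mul_le_mul_of_nonneg_left ?_ (Real.rpow_nonneg (by linarith) q)
        exact sum_prod_le_prod_tsum S _ (fun j m => (Real.rpow_pos_of_pos (rW1_pos (hγ j) m) _).le)
          fun j => (hasSum_rW1_rpow_neg (hγ j) hx).summable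
    _ = M ^ q * ∏ j : Fin d, (1 + 2 * realZeta (2 * α * q) * γ (j.1 + 1) ^ q) := by
        simp only [fun j : Fin d => (hasSum_rW1_rpow_neg (hγ j) hx).tsum_eq]

/-- Cardinality bound for the full weighted hyperbolic cross:
`|H̃_M| ≤ M^q ∏_{j=1}^d (1 + 2ζ(2αq)γ_j^q)` for every `q > 1/(2α)`. -/
theorem hyperbolic_cross_card_bound (d : ℕ) (α : ℝ) (γ : ℕ → ℝ) (hα : 1 / 2 < α)
    (hγ1 : γ 1 ≤ 1) (hγdec : ∀ j : ℕ, 1 ≤ j → γ (j + 1) ≤ γ j)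
    (hγpos : ∀ j : ℕ, 1 ≤ j → 0 < γ j) (M : ℝ) (hM : 1 ≤ M) (q : ℝ) (hq : 1 / (2 * α) < q) :
    (Nat.card {k : Fin d → ℤ // rW α γ k ≤ M} : ℝ) ≤
      M ^ q * ∏ j : Fin d, (1 + 2 * realZeta (2 * α * q) * γ (j.1 + 1) ^ q) :=
  hyperbolic_cross_card_bound_general d α γ hα hγpos M hM q hq
end
end

section
/- Let d ∈ ℕ, α > 1/2, weights 1 ≥ γ₁ ≥ γ₂ ≥ ⋯ > 0, n ∈ ℕ, z ∈ {0,…,n−1}^d, and let f ∈ C_{d,α,γ}. Then for every k ∈ ℤ₊^d and l ∈ ℤ₊^d, the tent-transformed lattice average of the product of basis functions satisfies (1/n) Σ_{i=1}^n φ_l(ψ(iz/n mod 1)) φ_k(ψ(iz/n mod 1)) = ((√2)^{|l|₀ + |k|₀} / 2^{2d}) Σ_{σ, σ′ ∈ {±1}^d} 1[σ(l) − σ′(k) ∈ Λ(z,n)^⊥]. -/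
open MeasureTheory Finset
open scoped Real

noncomputable section

/-! The tent transform is invisible to cosines of integer frequency:
`cos (π m ψ(t)) = cos (2π m t)`, and the right side is `1`-periodic, so at the lattice points
`φ_k(ψ({i z / n})) = √2 ^ |k|₀ ∏ⱼ cos (2π kⱼ i zⱼ / n)`. Writing each cosine as
`(e^{iθ} + e^{-iθ}) / 2` (and using that cosine is even on the `k`-factor) turns the product of
the two products into `2^{-2d} ∑_{σ,σ'} e^{2πi · i (σ(l) - σ'(k))·z / n}`. Averaging the
character `i ↦ e^{2πi · i h·z / n}` over `i = 1, …, n` gives the indicator of `h·z ≡ 0 (mod n)`.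
-/

lemma sum_Icc_pow_eq_ite {K : Type*} [DivisionRing K] [DecidableEq K] {ω : K} {n : ℕ}
    (hω : ω ^ n = 1) :
    ∑ i ∈ Icc 1 n, ω ^ i = if ω = 1 then (n : K) else 0 := by
  split_ifs with h1
  · simp [h1]
  · have hshift : ∑ i ∈ Icc 1 n, ω ^ i = ω * ∑ i ∈ range n, ω ^ i := by
      rw [mul_sum, range_eq_Ico, ← Ico_add_one_right_eq_Icc, ← sum_Ico_add' _ 0 n 1]
      simp only [pow_succ']
    rw [hshift, geom_sum_eq h1, hω, sub_self, zero_div, mul_zero]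

lemma cos_mul_tent (m : ℤ) (t : ℝ) : Real.cos (π * m * tent t) = Real.cos (2 * π * m * t) := by
  rcases le_total t (1 / 2) with h | h
  · rw [tent, abs_of_nonpos (by linarith)]
    ring_nf
  · rw [tent, abs_of_nonneg (by linarith),
      show π * m * (1 - (2 * t - 1)) = m * (2 * π) - 2 * π * m * t by ring,
      Real.cos_int_mul_two_pi_sub]

lemma cos_mul_fract (m : ℤ) (t : ℝ) :
    Real.cos (2 * π * m * Int.fract t) = Real.cos (2 * π * m * t) := by
  rw [Int.fract, show 2 * π * m * (t - ⌊t⌋) = 2 * π * m * t - (m * ⌊t⌋ : ℤ) * (2 * π) by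
    push_cast; ring, Real.cos_sub_int_mul_two_pi]

lemma phi_tentVec_fract {d : ℕ} (m : Fin d → ℕ) (x : Fin d → ℝ) :
    phi m (tentVec fun j => Int.fract (x j)) =
      Real.sqrt 2 ^ nnz m * ∏ j, Real.cos (2 * π * intCoe m j * x j) := by
  unfold phi tentVec intCoe
  congr 1
  refine prod_congr rfl fun j _ => ?_
  rw [← Int.cast_natCast, cos_mul_tent, cos_mul_fract]

section

open Complex

lemma sum_Icc_exp_eq_ite {n : ℕ} (hn : n ≠ 0) (s : ℤ) :
    ∑ i ∈ Icc 1 n, exp (2 * π * I * (i * s / n)) = if (n : ℤ) ∣ s then (n : ℂ) else 0 := by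
  have hζ := isPrimitiveRoot_exp n hn
  have hterm : ∀ i : ℕ, exp (2 * π * I * (i * s / n)) = (exp (2 * π * I / n) ^ s) ^ i := by
    intro i
    rw [← zpow_natCast, ← zpow_mul, ← exp_int_mul]
    push_cast
    ring_nf
  have hpow : (exp (2 * π * I / n) ^ s) ^ n = 1 := by
    rw [← zpow_natCast, ← zpow_mul, mul_comm s, zpow_mul, zpow_natCast, hζ.pow_eq_one, one_zpow]
  simp only [hterm, sum_Icc_pow_eq_ite hpow, hζ.zpow_eq_one_iff_dvd]

lemma ofReal_cos_eq_sum_bool (θ : ℝ) :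
    (Real.cos θ : ℂ) = (∑ b : Bool, exp ((if b then 1 else -1) * θ * I)) / 2 := by
  simp [Complex.cos]

lemma ofReal_prod_cos_eq_sum_sigApp {d : ℕ} (m : Fin d → ℤ) (x : Fin d → ℝ) :
    ((∏ j, Real.cos (2 * π * m j * x j) : ℝ) : ℂ) =
      (∑ σ : Fin d → Bool, exp (2 * π * I * ∑ j, (sigApp σ m j : ℂ) * x j)) / 2 ^ d := by
  simp only [ofReal_prod, ofReal_cos_eq_sum_bool, prod_div_distrib, prod_const, card_univ,
    Fintype.card_fin, prod_univ_sum, Fintype.piFinset_univ, ← exp_sum, mul_sum]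
  congr 1
  refine sum_congr rfl fun σ _ => congrArg exp (sum_congr rfl fun j _ => ?_)
  by_cases hσ : σ j <;> simp [sigApp, hσ] <;> ring

lemma ofReal_prod_cos_mul_prod_cos {d : ℕ} (l k : Fin d → ℤ) (x : Fin d → ℝ) :
    (((∏ j, Real.cos (2 * π * l j * x j)) * ∏ j, Real.cos (2 * π * k j * x j) : ℝ) : ℂ) =
      (∑ σ : Fin d → Bool, ∑ σ' : Fin d → Bool,
        exp (2 * π * I * ∑ j, ((sigApp σ l j - sigApp σ' k j : ℤ) : ℂ) * x j)) / 2 ^ (2 * d) := by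
  have hk : ∏ j, Real.cos (2 * π * k j * x j) = ∏ j, Real.cos (2 * π * (-k) j * x j) := by
    simp only [Pi.neg_apply, Int.cast_neg, mul_neg, neg_mul, Real.cos_neg]
  rw [ofReal_mul, hk, ofReal_prod_cos_eq_sum_sigApp, ofReal_prod_cos_eq_sum_sigApp,
    div_mul_div_comm, ← pow_add, ← two_mul, sum_mul_sum]
  refine congrArg (· / _) (sum_congr rfl fun σ _ => sum_congr rfl fun σ' _ => ?_)
  rw [← exp_add, ← mul_add, ← sum_add_distrib]
  simp only [sigApp, Pi.neg_apply]
  push_cast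
  exact congrArg (fun t => exp (2 * π * I * t)) (sum_congr rfl fun j _ => by ring)

lemma lattice_average_prod_cos {d n : ℕ} (hn : n ≠ 0) (z : Fin d → ℕ) (l k : Fin d → ℤ) :
    (n : ℝ)⁻¹ * ∑ i ∈ Icc 1 n, (∏ j, Real.cos (2 * π * l j * (i * z j / n))) *
        ∏ j, Real.cos (2 * π * k j * (i * z j / n)) =
      (∑ σ : Fin d → Bool, ∑ σ' : Fin d → Bool,
        if inDual d n z (fun j => sigApp σ l j - sigApp σ' k j) then (1 : ℝ) else 0) /
        2 ^ (2 * d) := by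
  have hexp : ∀ (h : Fin d → ℤ) (i : ℕ),
      exp (2 * π * I * ∑ j, (h j : ℂ) * ((i * z j / n : ℝ) : ℂ)) =
        exp (2 * π * I * (i * (∑ j, h j * z j : ℤ) / n)) := by
    intro h i
    congr 1
    push_cast
    simp only [mul_sum, sum_div]
    exact sum_congr rfl fun j _ => by ring
  have hchar : ∀ h : Fin d → ℤ,
      (n : ℂ)⁻¹ * ∑ i ∈ Icc 1 n, exp (2 * π * I * ∑ j, (h j : ℂ) * ((i * z j / n : ℝ) : ℂ)) =
        if inDual d n z h then 1 else 0 := by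
    intro h
    simp only [hexp, sum_Icc_exp_eq_ite hn, inDual, ← Int.dvd_iff_emod_eq_zero]
    split_ifs <;> simp [hn]
  apply ofReal_injective
  calc _ = (n : ℂ)⁻¹ * ∑ i ∈ Icc 1 n, (∑ σ : Fin d → Bool, ∑ σ' : Fin d → Bool,
        exp (2 * π * I * ∑ j, ((sigApp σ l j - sigApp σ' k j : ℤ) : ℂ) *
          ((i * z j / n : ℝ) : ℂ))) / 2 ^ (2 * d) := by
        simp only [ofReal_mul, ofReal_inv, ofReal_sum, ofReal_natCast,
          ← ofReal_prod_cos_mul_prod_cos]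
    _ = (∑ σ : Fin d → Bool, ∑ σ' : Fin d → Bool, (n : ℂ)⁻¹ * ∑ i ∈ Icc 1 n,
        exp (2 * π * I * ∑ j, ((sigApp σ l j - sigApp σ' k j : ℤ) : ℂ) *
          ((i * z j / n : ℝ) : ℂ))) / 2 ^ (2 * d) := by
        rw [← sum_div, ← mul_div_assoc]
        congr 1
        simp only [mul_sum]
        exact sum_comm.trans (sum_congr rfl fun σ _ => sum_comm)
    _ = _ := by
        simp only [hchar]
        simp only [ofReal_div, ofReal_sum, ofReal_pow, ofReal_ofNat, apply_ite ofReal,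
          ofReal_one, ofReal_zero]

end

theorem tent_lattice_average_basis_product_general (d : ℕ) (n : ℕ) (hn : 0 < n) (z : Fin d → ℕ)
    (k l : Fin d → ℕ) :
    ((n : ℝ)⁻¹ * ∑ i ∈ Finset.Icc 1 n,
        phi l (tentVec (latPt d n z i)) * phi k (tentVec (latPt d n z i))) =
      Real.sqrt 2 ^ (nnz l + nnz k) / 2 ^ (2 * d) *
        ∑ σ : Fin d → Bool, ∑ σ' : Fin d → Bool,
          if inDual d n z (fun j => sigApp σ (intCoe l) j - sigApp σ' (intCoe k) j)
          then (1 : ℝ) else 0 := by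
  calc _ = Real.sqrt 2 ^ (nnz l + nnz k) * ((n : ℝ)⁻¹ * ∑ i ∈ Icc 1 n,
        (∏ j, Real.cos (2 * π * intCoe l j * (i * z j / n))) *
          ∏ j, Real.cos (2 * π * intCoe k j * (i * z j / n))) := by
        unfold latPt
        simp only [phi_tentVec_fract, mul_sum]
        exact sum_congr rfl fun i _ => by ring
    _ = _ := by
        rw [lattice_average_prod_cos hn.ne']
        ring

/-- The tent-transformed lattice average of a product of cosine basis
functions satisfies `(1/n) Σ_{i=1}^n φ_l(ψ(t_i)) φ_k(ψ(t_i)) =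
((√2)^{|l|₀+|k|₀}/2^{2d}) Σ_{σ,σ'∈{±1}^d} 1[σ(l)-σ'(k) ∈ Λ(z,n)^⊥]`. -/
theorem tent_lattice_average_basis_product (d : ℕ) (α : ℝ) (γ : ℕ → ℝ) (hα : 1 / 2 < α)
    (hγ1 : γ 1 ≤ 1) (hγdec : ∀ j : ℕ, 1 ≤ j → γ (j + 1) ≤ γ j)
    (hγpos : ∀ j : ℕ, 1 ≤ j → 0 < γ j)
    (n : ℕ) (hn : 0 < n) (z : Fin d → ℕ) (hz : ∀ j, z j < n)
    (f : (Fin d → ℝ) → ℂ) (hf : memCos d α γ f) (k l : Fin d → ℕ) :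
    ((n : ℝ)⁻¹ * ∑ i ∈ Finset.Icc 1 n,
        phi l (tentVec (latPt d n z i)) * phi k (tentVec (latPt d n z i))) =
      Real.sqrt 2 ^ (nnz l + nnz k) / 2 ^ (2 * d) *
        ∑ σ : Fin d → Bool, ∑ σ' : Fin d → Bool,
          if inDual d n z (fun j => sigApp σ (intCoe l) j - sigApp σ' (intCoe k) j)
          then (1 : ℝ) else 0 :=
  tent_lattice_average_basis_product_general d n hn z k l
end
end
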